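/- Fix reals Ξ > 1, c > -1, Z > 0, ν, λ, and a continuous function ρ : [1,Ξ] → ℝ. Define W(X) := √(X+c)/√Z − ν + (1/2)·∫₁^Ξ ρ(T) dT /((√(X+c)+√(T+c))·√(T+c)), ρ₀ := 1/√Z − (1/2)·∫₁^Ξ ρ(T)·(T+c)^{-3/2} dT, and assume ρ₀ ≠ 0. Define G₂(U|V) := 4λ²/(√(U+c)·√(V+c)·(√(U+c)+√(V+c))²), for U ≠ V define H(U,V|S) := 16λ²·(∂/∂V)[(G₂(U|S)−G₂(V|S))/(U−V)], and define G₃(X|Y|Z) := −32λ⁵/(ρ₀·(X+c)^{3/2}·(Y+c)^{3/2}·(Z+c)^{3/2}). Then for all X, Y, Z ≥ 1 with X ≠ Y and X ≠ Z: (W(X)+ν)·G₃(X|Y|Z) + (1/2)·∫₁^Ξ ρ(T)·(G₃(X|Y|Z)−G₃(T|Y|Z))/(X−T) dT = −λ·(H(X,Y|Z) + H(X,Z|Y)) − 2λ·G₂(X|Y)·G₂(X|Z), where the integrand is extended continuously to T = X. -/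

import Mathlib

/-!
Put `a = √(X+c)` and `t = √(T+c)`. Since `G₃(T|Y|V)` is a constant multiple of `t⁻³`, the
difference quotient in the integrand splits as
`(t⁻³ - a⁻³)/(a² - t²) = a⁻³ · 1/((a+t)t) + a⁻² · t⁻³`.
Against `ρ`, the first piece integrates to `2(W(X)+ν) - 2a/√Z`, cancelling `(W(X)+ν)G₃(X|Y|V)`,
and the second to `2/√Z - 2ρ₀`; the `1/√Z` terms cancel and the remaining `ρ₀` cancels the one in
the denominator of `G₃`, leaving `-32λ⁵/(a²(Y+c)^{3/2}(V+c)^{3/2})`. Once the `V`-derivative in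
`H` is computed, the right side is a rational function of `a, √(Y+c), √(V+c)` with the same value.
-/

open MeasureTheory

/-- `G₂(U|V)` in the variables `u = √(U+c)`, `v = √(V+c)`; `twoPointDeriv` is `∂G₂(U|V)/∂U` and
`slopeDerivTwoPoint` is `H(U,V|S)` in the same variables. -/
noncomputable def twoPoint (lam u v : ℝ) : ℝ := 4 * lam ^ 2 / (u * v * (u + v) ^ 2)

noncomputable def twoPointDeriv (lam u v : ℝ) : ℝ :=
  -2 * lam ^ 2 * (3 * u + v) / (u ^ 3 * v * (u + v) ^ 3)

noncomputable def slopeDerivTwoPoint (lam u v s : ℝ) : ℝ :=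
  16 * lam ^ 2 * ((twoPoint lam u s - twoPoint lam v s -
    twoPointDeriv lam v s * (u ^ 2 - v ^ 2)) / (u ^ 2 - v ^ 2) ^ 2)

theorem hasDerivAt_twoPoint_sqrt (lam : ℝ) {c U v : ℝ} (hU : 0 < U + c) (hv : 0 < v) :
    HasDerivAt (fun U => twoPoint lam √(U + c) v) (twoPointDeriv lam √(U + c) v) U := by
  have hsqrt : HasDerivAt (fun U => √(U + c)) (1 / (2 * √(U + c))) U := by
    simpa using ((hasDerivAt_id U).add_const c).sqrt hU.ne'
  have hden := (hsqrt.mul_const v).fun_mul ((hsqrt.add_const v).fun_pow 2)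
  refine ((hasDerivAt_const U (4 * lam ^ 2)).fun_div hden (by positivity)).congr_deriv ?_
  unfold twoPointDeriv
  field_simp
  ring

theorem HasDerivAt.sub_div_sub {f : ℝ → ℝ} {f' U V : ℝ} (hf : HasDerivAt f f' V)
    (hUV : U ≠ V) :
    HasDerivAt (fun V' => (f U - f V') / (U - V'))
      ((f U - f V - f' * (U - V)) / (U - V) ^ 2) V := by
  have hden : HasDerivAt (fun V' => U - V') (-1) V := by
    simpa using (hasDerivAt_id V).const_sub U
  refine (((hasDerivAt_const V (f U)).fun_sub hf).fun_div hden
    (sub_ne_zero.mpr hUV)).congr_deriv ?_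
  ring

theorem schwingerDyson_rhs_eq (lam : ℝ) {a b k : ℝ} (ha : 0 < a) (hb : 0 < b) (hk : 0 < k)
    (hab : a ^ 2 ≠ b ^ 2) (hak : a ^ 2 ≠ k ^ 2) :
    -lam * (slopeDerivTwoPoint lam a b k + slopeDerivTwoPoint lam a k b) -
        2 * lam * twoPoint lam a b * twoPoint lam a k =
      -32 * lam ^ 5 / (a ^ 2 * b ^ 3 * k ^ 3) := by
  have hab' : a ^ 2 - b ^ 2 ≠ 0 := sub_ne_zero.mpr hab
  have hak' : a ^ 2 - k ^ 2 ≠ 0 := sub_ne_zero.mpr hak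
  unfold slopeDerivTwoPoint twoPoint twoPointDeriv
  field_simp
  ring

theorem one_div_pow_three_sub_div_sq_sub_sq {a t : ℝ} (ha : 0 < a) (ht : 0 < t)
    (hat : a ^ 2 ≠ t ^ 2) :
    (1 / t ^ 3 - 1 / a ^ 3) / (a ^ 2 - t ^ 2) =
      1 / a ^ 3 * (1 / ((a + t) * t)) + 1 / a ^ 2 * (1 / t ^ 3) := by
  have hat' : a ^ 2 - t ^ 2 ≠ 0 := sub_ne_zero.mpr hat
  field_simp
  ring

theorem deriv_twoPoint_slope (lam : ℝ) {c U V S : ℝ} (hU : 0 < U + c) (hV : 0 < V + c)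
    (hS : 0 < S + c) (hUV : U ≠ V) :
    16 * lam ^ 2 * deriv (fun V' => (twoPoint lam √(U + c) √(S + c) -
        twoPoint lam √(V' + c) √(S + c)) / (U - V')) V =
      slopeDerivTwoPoint lam √(U + c) √(V + c) √(S + c) := by
  rw [((hasDerivAt_twoPoint_sqrt lam hV (Real.sqrt_pos.mpr hS)).sub_div_sub hUV).deriv,
    slopeDerivTwoPoint, Real.sq_sqrt hU.le, Real.sq_sqrt hV.le, add_sub_add_right_eq_sub]

section SlopeKernel

variable {c : ℝ} {ρ : ℝ → ℝ}

/-- The continuous extension to `T = X` of `ρ T * (t⁻³ - a⁻³) / (X - T)`, see `slopeKernel_eq`. -/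
noncomputable def slopeKernel (c : ℝ) (ρ : ℝ → ℝ) (X T : ℝ) : ℝ :=
  1 / √(X + c) ^ 3 * (ρ T / ((√(X + c) + √(T + c)) * √(T + c))) +
    1 / √(X + c) ^ 2 * (ρ T / √(T + c) ^ 3)

theorem slopeKernel_eq {X T : ℝ} (hX : 0 < X + c) (hT : 0 < T + c) (hXT : X ≠ T) :
    slopeKernel c ρ X T = ρ T * (1 / √(T + c) ^ 3 - 1 / √(X + c) ^ 3) / (X - T) := by
  have hsq : X - T = √(X + c) ^ 2 - √(T + c) ^ 2 := by
    rw [Real.sq_sqrt hX.le, Real.sq_sqrt hT.le]; ring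
  rw [hsq, mul_div_assoc, one_div_pow_three_sub_div_sq_sub_sq (Real.sqrt_pos.mpr hX)
    (Real.sqrt_pos.mpr hT) (sub_ne_zero.mp (hsq ▸ sub_ne_zero.mpr hXT)), slopeKernel]
  ring

theorem continuousOn_slopeKernel {s : Set ℝ} (hρ : ContinuousOn ρ s) (hs : ∀ T ∈ s, 0 < T + c)
    (X : ℝ) : ContinuousOn (slopeKernel c ρ X) s := by
  refine (continuousOn_const.mul (hρ.div (by fun_prop) fun T hT => ?_)).add
    (continuousOn_const.mul (hρ.div (by fun_prop) fun T hT => ?_)) <;>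
  · have := Real.sqrt_pos.mpr (hs T hT)
    positivity

theorem integral_slopeKernel {a b : ℝ} (hab : a ≤ b) (hρ : ContinuousOn ρ (Set.Icc a b))
    (hs : ∀ T ∈ Set.Icc a b, 0 < T + c) (X : ℝ) :
    ∫ T in a..b, slopeKernel c ρ X T =
      1 / √(X + c) ^ 3 * (∫ T in a..b, ρ T / ((√(X + c) + √(T + c)) * √(T + c))) +
        1 / √(X + c) ^ 2 * ∫ T in a..b, ρ T / √(T + c) ^ 3 := by
  have ht : ∀ T ∈ Set.Icc a b, 0 < √(T + c) := fun T hT => Real.sqrt_pos.mpr (hs T hT)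
  have hint₁ :
      IntervalIntegrable (fun T => ρ T / ((√(X + c) + √(T + c)) * √(T + c))) volume a b :=
    (hρ.div (by fun_prop) fun T hT => by have := ht T hT; positivity).intervalIntegrable_of_Icc hab
  have hint₂ : IntervalIntegrable (fun T => ρ T / √(T + c) ^ 3) volume a b :=
    (hρ.div (by fun_prop) fun T hT => (pow_pos (ht T hT) 3).ne').intervalIntegrable_of_Icc hab
  simp only [slopeKernel]
  rw [intervalIntegral.integral_add (hint₁.const_mul _) (hint₂.const_mul _),
    intervalIntegral.integral_const_mul, intervalIntegral.integral_const_mul]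

end SlopeKernel

theorem stmt_9_general (Ξ c Z ν lam ρ₀ : ℝ) (hΞ : 1 < Ξ) (hc : -1 < c)
    (ρ : ℝ → ℝ) (hρ : ContinuousOn ρ (Set.Icc 1 Ξ))
    (W : ℝ → ℝ)
    (hW : ∀ X, W X = Real.sqrt (X + c) / Real.sqrt Z - ν +
      (1 / 2) * ∫ T in (1 : ℝ)..Ξ,
        ρ T / ((Real.sqrt (X + c) + Real.sqrt (T + c)) * Real.sqrt (T + c)))
    (hρ₀ : ρ₀ = 1 / Real.sqrt Z -
      (1 / 2) * ∫ T in (1 : ℝ)..Ξ, ρ T / Real.sqrt (T + c) ^ 3)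
    (hρ₀ne : ρ₀ ≠ 0)
    (G₂ : ℝ → ℝ → ℝ)
    (hG₂ : ∀ U V, G₂ U V = 4 * lam ^ 2 /
      (Real.sqrt (U + c) * Real.sqrt (V + c) * (Real.sqrt (U + c) + Real.sqrt (V + c)) ^ 2))
    (H : ℝ → ℝ → ℝ → ℝ)
    (hH : ∀ U V S, U ≠ V →
      H U V S = 16 * lam ^ 2 * deriv (fun V' => (G₂ U S - G₂ V' S) / (U - V')) V)
    (G₃ : ℝ → ℝ → ℝ → ℝ)
    (hG₃ : ∀ X Y V, G₃ X Y V = -(32) * lam ^ 5 /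
      (ρ₀ * Real.sqrt (X + c) ^ 3 * Real.sqrt (Y + c) ^ 3 * Real.sqrt (V + c) ^ 3)) :
    ∀ X Y V, 1 ≤ X → 1 ≤ Y → 1 ≤ V → X ≠ Y → X ≠ V →
      ∃ F : ℝ → ℝ, ContinuousOn F (Set.Icc 1 Ξ) ∧
        (∀ T ∈ Set.Icc 1 Ξ, T ≠ X → F T = ρ T * (G₃ X Y V - G₃ T Y V) / (X - T)) ∧
        (W X + ν) * G₃ X Y V + (1 / 2) * ∫ T in (1 : ℝ)..Ξ, F T =
          -lam * (H X Y V + H X V Y) - 2 * lam * G₂ X Y * G₂ X V := by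
  intro X Y V hX hY hV hXY hXV
  have hpos : ∀ U, 1 ≤ U → 0 < U + c := fun U hU => by linarith
  have hsq_ne : ∀ U, 1 ≤ U → X ≠ U → √(X + c) ^ 2 ≠ √(U + c) ^ 2 := fun U hU hXU => by
    rw [Real.sq_sqrt (hpos X hX).le, Real.sq_sqrt (hpos U hU).le]
    exact fun h => hXU (by linarith)
  have hIcc : ∀ T ∈ Set.Icc 1 Ξ, 0 < T + c := fun T hT => hpos T hT.1
  obtain ⟨K, hK⟩ : ∃ K, K = 32 * lam ^ 5 / (ρ₀ * √(Y + c) ^ 3 * √(V + c) ^ 3) := ⟨_, rfl⟩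
  have hG₃K : ∀ U, G₃ U Y V = -K / √(U + c) ^ 3 := fun U => by rw [hG₃, hK]; ring
  have hb := Real.sqrt_pos.mpr (hpos Y hY)
  have hk := Real.sqrt_pos.mpr (hpos V hV)
  have hKρ₀ : K * ρ₀ = 32 * lam ^ 5 / (√(Y + c) ^ 3 * √(V + c) ^ 3) := by
    rw [hK]; field_simp
  refine ⟨fun T => K * slopeKernel c ρ X T,
    continuousOn_const.mul (continuousOn_slopeKernel hρ hIcc X), fun T hT hTX => ?_, ?_⟩
  · beta_reduce
    rw [slopeKernel_eq (hpos X hX) (hIcc T hT) hTX.symm, hG₃K, hG₃K]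
    ring
  · obtain rfl : G₂ = fun U V => twoPoint lam √(U + c) √(V + c) := funext₂ hG₂
    have ha := Real.sqrt_pos.mpr (hpos X hX)
    rw [intervalIntegral.integral_const_mul, integral_slopeKernel hΞ.le hρ hIcc X,
      hH X Y V hXY, hH X V Y hXV,
      deriv_twoPoint_slope lam (hpos X hX) (hpos Y hY) (hpos V hV) hXY,
      deriv_twoPoint_slope lam (hpos X hX) (hpos V hV) (hpos Y hY) hXV,
      schwingerDyson_rhs_eq lam ha hb hk (hsq_ne Y hY hXY) (hsq_ne V hV hXV), hW X, hG₃K]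
    calc _ = -(K * ρ₀) / √(X + c) ^ 2 := by rw [hρ₀]; field_simp; ring
      _ = _ := by rw [hKρ₀]; field_simp

/-- The Schwinger–Dyson integral equation for the `(1+1+1)`-point function and its explicit
solution `G₃(X|Y|V) = −32λ⁵/(ρ₀(X+c)^{3/2}(Y+c)^{3/2}(V+c)^{3/2})`:
`(W(X)+ν)G₃(X|Y|V) + (1/2)∫₁^Ξ ρ(T)(G₃(X|Y|V)−G₃(T|Y|V))/(X−T) dT
  = −λ(H(X,Y|V) + H(X,V|Y)) − 2λG₂(X|Y)G₂(X|V)`,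
the integrand being extended continuously to `T = X`. -/
theorem stmt_9 (Ξ c Z ν lam ρ₀ : ℝ) (hΞ : 1 < Ξ) (hc : -1 < c) (hZ : 0 < Z)
    (ρ : ℝ → ℝ) (hρ : ContinuousOn ρ (Set.Icc 1 Ξ))
    (W : ℝ → ℝ)
    (hW : ∀ X, W X = Real.sqrt (X + c) / Real.sqrt Z - ν +
      (1 / 2) * ∫ T in (1 : ℝ)..Ξ,
        ρ T / ((Real.sqrt (X + c) + Real.sqrt (T + c)) * Real.sqrt (T + c)))
    (hρ₀ : ρ₀ = 1 / Real.sqrt Z -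
      (1 / 2) * ∫ T in (1 : ℝ)..Ξ, ρ T / Real.sqrt (T + c) ^ 3)
    (hρ₀ne : ρ₀ ≠ 0)
    (G₂ : ℝ → ℝ → ℝ)
    (hG₂ : ∀ U V, G₂ U V = 4 * lam ^ 2 /
      (Real.sqrt (U + c) * Real.sqrt (V + c) * (Real.sqrt (U + c) + Real.sqrt (V + c)) ^ 2))
    (H : ℝ → ℝ → ℝ → ℝ)
    (hH : ∀ U V S, U ≠ V →
      H U V S = 16 * lam ^ 2 * deriv (fun V' => (G₂ U S - G₂ V' S) / (U - V')) V)
    (G₃ : ℝ → ℝ → ℝ → ℝ)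
    (hG₃ : ∀ X Y V, G₃ X Y V = -(32) * lam ^ 5 /
      (ρ₀ * Real.sqrt (X + c) ^ 3 * Real.sqrt (Y + c) ^ 3 * Real.sqrt (V + c) ^ 3)) :
    ∀ X Y V, 1 ≤ X → 1 ≤ Y → 1 ≤ V → X ≠ Y → X ≠ V →
      ∃ F : ℝ → ℝ, ContinuousOn F (Set.Icc 1 Ξ) ∧
        (∀ T ∈ Set.Icc 1 Ξ, T ≠ X → F T = ρ T * (G₃ X Y V - G₃ T Y V) / (X - T)) ∧
        (W X + ν) * G₃ X Y V + (1 / 2) * ∫ T in (1 : ℝ)..Ξ, F T =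
          -lam * (H X Y V + H X V Y) - 2 * lam * G₂ X Y * G₂ X V :=
  stmt_9_general Ξ c Z ν lam ρ₀ hΞ hc ρ hρ W hW hρ₀ hρ₀ne G₂ hG₂ H hH G₃ hG₃
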